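/- The function t ↦ tan t · sin t is convex on the interval [0, π/2). -/

import Mathlib

/-! Since `tan t * sin t = 1 / cos t - cos t`, it suffices that `cos` is concave and positive on
`[0, π/2)`: the reciprocal of a positive concave function is convex, and so is `-cos`. -/

open Real Set

theorem ConcaveOn.convexOn_inv {E : Type*} [AddCommMonoid E] [Module ℝ E] {s : Set E}
    {f : E → ℝ} (hf : ConcaveOn ℝ s f) (hpos : ∀ x ∈ s, 0 < f x) :
    ConvexOn ℝ s fun x => (f x)⁻¹ := by
  refine ⟨hf.1, fun x hx y hy a b ha hb hab => ?_⟩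
  have hmid : a * f x + b * f y ≤ f (a • x + b • y) := hf.2 hx hy ha hb hab
  have hcomb : 0 < a * f x + b * f y :=
    convex_Ioi (0 : ℝ) (hpos x hx) (hpos y hy) ha hb hab
  calc (f (a • x + b • y))⁻¹ ≤ (a * f x + b * f y)⁻¹ := inv_anti₀ hcomb hmid
    _ ≤ a * (f x)⁻¹ + b * (f y)⁻¹ := by
      simpa using (convexOn_zpow (-1 : ℤ)).2 (hpos x hx) (hpos y hy) ha hb hab

theorem tan_mul_sin_eq_inv_cos_sub_cos (t : ℝ) : tan t * sin t = (cos t)⁻¹ - cos t := by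
  rw [tan_eq_sin_div_cos]
  rcases eq_or_ne (cos t) 0 with hcos | hcos
  · simp [hcos]
  · field_simp
    linarith [sin_sq_add_cos_sq t]

theorem convexOn_tan_mul_sin :
    ConvexOn ℝ (Set.Ico 0 (π / 2)) (fun t : ℝ => tan t * sin t) := by
  have hcos : ConcaveOn ℝ (Ico 0 (π / 2)) cos :=
    strictConcaveOn_cos_Icc.concaveOn.subset
      (Ico_subset_Icc_self.trans (Icc_subset_Icc_left (by linarith [pi_pos]))) (convex_Ico _ _)
  have hpos : ∀ t ∈ Ico 0 (π / 2), 0 < cos t := fun t ht =>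
    cos_pos_of_mem_Ioo ⟨by linarith [ht.1, pi_pos], ht.2⟩
  exact ((hcos.convexOn_inv hpos).add hcos.neg).congr fun t _ =>
    (tan_mul_sin_eq_inv_cos_sub_cos t).symm
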